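/- Let r ≥ 3 and let a₁,…,a_r, b₁,…,b_r ∈ ℝ², and consider the lines ℓ_{a_i,b_i} in ℝ³ for i = 1,…,r. If all the lines ℓ_{a_1,b_1},…,ℓ_{a_r,b_r} pass through a common point of ℝ³, then there exists an orientation-preserving isometry T of ℝ² (i.e., an isometry whose linear part has determinant 1) such that T(a_i) = b_i for every i = 1,…,r; in particular the sequences (a₁,…,a_r) and (b₁,…,b_r) are congruent. -/

import Mathlib

/-- Points of the plane `ℝ²` with the Euclidean norm. -/
abbrev Pt := EuclideanSpace ℝ (Fin 2)

/-- Counterclockwise rotation of a vector of `ℝ²` by `π/2`: `(x, y)^⊥ = (-y, x)`. -/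
noncomputable def perp (v : Pt) : Pt := WithLp.toLp 2 ![-(v 1), v 0]

/-- The line `ℓ_{a,b} = { ((a+b)/2 + t·((a−b)/2)^⊥, t) : t ∈ ℝ }` in `ℝ³ = ℝ² × ℝ`. -/
noncomputable def lineOf (a b : Pt) : Set (Pt × ℝ) :=
  {x | ∃ t : ℝ, x = ((2⁻¹ : ℝ) • (a + b) + t • perp ((2⁻¹ : ℝ) • (a - b)), t)}

/-- The direction vector `(((a−b)/2)^⊥, 1)` of the line `ℓ_{a,b}`. -/
noncomputable def dirOf (a b : Pt) : Pt × ℝ := (perp ((2⁻¹ : ℝ) • (a - b)), 1)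

/-- `T : ℝ² → ℝ²` is an isometry (a distance-preserving bijection of the plane,
hence affine with norm-preserving linear part) with linear part of determinant
`e ∈ {1, -1}`. -/
def IsIsometryWithDet (e : ℝ) (T : Pt → Pt) : Prop :=
  ∃ (A : Pt →ₗ[ℝ] Pt) (w : Pt),
    (∀ x : Pt, ‖A x‖ = ‖x‖) ∧ LinearMap.det A = e ∧ ∀ x : Pt, T x = A x + w

/-!
If `(p, t)` lies on `ℓ_{a,b}`, write `d = (a - b)/2`; then `a - p = d - t d^⊥` and
`b - p = -d - t d^⊥`. Identifying `ℝ²` with `ℂ`, so that `⊥` is multiplication by `i`, this says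
`b - p = ρ (a - p)` with `ρ = -(1 + i t)/(1 - i t) = -(1 + i t)² / (1 + t²)`, a unit complex number
depending only on the height `t` of the common point. Hence the rotation by `ρ` about `p`
sends every `a_i` to `b_i`.
-/

lemma perp_apply_zero (v : Pt) : perp v 0 = -(v 1) := rfl

lemma perp_apply_one (v : Pt) : perp v 1 = v 0 := rfl

lemma perp_perp (v : Pt) : perp (perp v) = -v := by
  ext i; fin_cases i <;> simp [perp]

noncomputable def perpLinear : Pt →ₗ[ℝ] Pt where
  toFun := perp
  map_add' x y := by ext i; fin_cases i <;> simp [perp, add_comm]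
  map_smul' m x := by ext i; fin_cases i <;> simp [perp]

lemma perp_sub (x y : Pt) : perp (x - y) = perp x - perp y := perpLinear.map_sub x y

lemma perp_smul (m : ℝ) (x : Pt) : perp (m • x) = m • perp x := perpLinear.map_smul m x

/-- Multiplication by the complex number `c + i s`. -/
noncomputable def rotMap (c s : ℝ) : Pt →ₗ[ℝ] Pt := c • LinearMap.id + s • perpLinear

lemma rotMap_apply (c s : ℝ) (v : Pt) : rotMap c s v = c • v + s • perp v := rfl

lemma norm_rotMap (c s : ℝ) (hcs : c ^ 2 + s ^ 2 = 1) (v : Pt) : ‖rotMap c s v‖ = ‖v‖ := by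
  rw [EuclideanSpace.norm_eq, EuclideanSpace.norm_eq]
  congr 1
  simp only [Fin.sum_univ_two, rotMap_apply, PiLp.add_apply, PiLp.smul_apply,
    perp_apply_zero, perp_apply_one, smul_eq_mul, Real.norm_eq_abs, sq_abs]
  linear_combination (v 0 ^ 2 + v 1 ^ 2) * hcs

lemma det_rotMap (c s : ℝ) : LinearMap.det (rotMap c s) = c ^ 2 + s ^ 2 := by
  rw [← LinearMap.det_toMatrix (EuclideanSpace.basisFun (Fin 2) ℝ).toBasis,
    Matrix.det_fin_two]
  simp [LinearMap.toMatrix_apply, rotMap_apply, perp_apply_zero, perp_apply_one]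
  ring

lemma isIsometryWithDet_one_rotMap_about (c s : ℝ) (hcs : c ^ 2 + s ^ 2 = 1) (p : Pt) :
    IsIsometryWithDet 1 (fun x => rotMap c s (x - p) + p) :=
  ⟨rotMap c s, p - rotMap c s p, norm_rotMap c s hcs, (det_rotMap c s).trans hcs,
    fun x => by simp only [map_sub]; abel⟩

lemma IsIsometryWithDet.dist_eq {e : ℝ} {T : Pt → Pt} (hT : IsIsometryWithDet e T) (x y : Pt) :
    dist (T x) (T y) = dist x y := by
  obtain ⟨A, w, hA, -, hTx⟩ := hT
  rw [dist_eq_norm, dist_eq_norm, hTx, hTx, add_sub_add_right_eq_sub, ← map_sub, hA]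

/-- The rotation `ρ = -(1 + i t)² / (1 + t²)` attached to the height `t`. -/
noncomputable def heightRotation (t : ℝ) : Pt →ₗ[ℝ] Pt :=
  rotMap ((t ^ 2 - 1) / (t ^ 2 + 1)) (-2 * t / (t ^ 2 + 1))

lemma heightRotation_cos_sq_add_sin_sq (t : ℝ) :
    ((t ^ 2 - 1) / (t ^ 2 + 1)) ^ 2 + (-2 * t / (t ^ 2 + 1)) ^ 2 = 1 := by
  field_simp; ring

lemma heightRotation_sub_eq {a b p : Pt} {t : ℝ} (h : (p, t) ∈ lineOf a b) :
    heightRotation t (a - p) = b - p := by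
  obtain ⟨_, hu⟩ := h
  obtain ⟨hp, rfl⟩ := Prod.mk.inj hu
  set d : Pt := (2⁻¹ : ℝ) • (a - b)
  have ha : a - p = d - t • perp d := by rw [hp]; module
  have hb : b - p = -d - t • perp d := by rw [hp]; module
  clear_value d
  have hpos : t ^ 2 + 1 ≠ 0 := by positivity
  have hc : (t ^ 2 - 1) / (t ^ 2 + 1) + -2 * t / (t ^ 2 + 1) * t = -1 := by
    field_simp; ring
  have hs : -2 * t / (t ^ 2 + 1) - (t ^ 2 - 1) / (t ^ 2 + 1) * t = -t := by
    field_simp; ring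
  calc heightRotation t (a - p)
      = ((t ^ 2 - 1) / (t ^ 2 + 1) + -2 * t / (t ^ 2 + 1) * t) • d
        + (-2 * t / (t ^ 2 + 1) - (t ^ 2 - 1) / (t ^ 2 + 1) * t) • perp d := by
        rw [heightRotation, rotMap_apply, ha, perp_sub, perp_smul, perp_perp]
        module
    _ = b - p := by rw [hc, hs, hb]; module

theorem concurrent_lines_orientation_preserving_congruence_general
    (r : ℕ) (a b : Fin r → Pt)
    (h : ∃ x : Pt × ℝ, ∀ i : Fin r, x ∈ lineOf (a i) (b i)) :
    ∃ T : Pt → Pt, IsIsometryWithDet 1 T ∧ (∀ i : Fin r, T (a i) = b i) ∧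
      ∀ i j : Fin r, dist (a i) (a j) = dist (b i) (b j) := by
  obtain ⟨⟨p, t⟩, hx⟩ := h
  have hT := isIsometryWithDet_one_rotMap_about _ _ (heightRotation_cos_sq_add_sin_sq t) p
  have hab : ∀ i, heightRotation t (a i - p) + p = b i := fun i => by
    rw [heightRotation_sub_eq (hx i), sub_add_cancel]
  exact ⟨_, hT, hab, fun i j => by rw [← hab i, ← hab j]; exact (hT.dist_eq _ _).symm⟩

/-- **Lemma 2.1(a).** If `r ≥ 3` and the lines `ℓ_{a_i, b_i}`, `i = 1, …, r`, all
pass through a common point of `ℝ³`, then there is an orientation-preserving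
isometry `T` of `ℝ²` (determinant of the linear part equal to `1`) with
`T(a_i) = b_i` for all `i`; in particular `(a_i)` and `(b_i)` are congruent. -/
theorem concurrent_lines_orientation_preserving_congruence
    (r : ℕ) (hr : 3 ≤ r) (a b : Fin r → Pt)
    (h : ∃ x : Pt × ℝ, ∀ i : Fin r, x ∈ lineOf (a i) (b i)) :
    ∃ T : Pt → Pt, IsIsometryWithDet 1 T ∧ (∀ i : Fin r, T (a i) = b i) ∧
      ∀ i j : Fin r, dist (a i) (a j) = dist (b i) (b j) :=
  concurrent_lines_orientation_preserving_congruence_general r a b h
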